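/- arXiv:1704.02695 — 3 statements merged into one kernel-verified Lean document; each statement's English description precedes it below -/
import Mathlib

section
/- Let α, β : ℤ × ℤ → ℂ be double sequences such that β is antisymmetric (β(n,k) = −β(k,n) for all n,k), α(n,n) ≠ 0 for every integer n, β(n,k) ≠ 0 whenever n ≠ k, and α, β satisfy the triple sum identity (TSI). For integers k ≤ n define F(n,k) = (∏_{i=k}^{n−1} α(i,k)) / (∏_{i=k+1}^{n} β(i,k)) and G(n,k) = (α(k,k)/α(n,n)) · (∏_{i=k+1}^{n} α(i,n)) / (∏_{i=k}^{n−1} β(i,n)). Then for all integers k ≤ n, ∑_{i=k}^{n} F(n,i)·G(i,k) equals 1 if n = k and equals 0 if n > k. -/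
/-!
After cancelling `α i i`, the `(n, k)` entry of `F G` for `k < n` is `α k k` times a divided
difference over the `n - k + 1` nodes `k, …, n` of the product of the `n - k - 1` functions
`α j ·`, `k < j < n`. The triple sum identity writes each `α c ·` as a combination of
`β a ·` and `β b ·` for any two nodes `a ≠ b`, and multiplying by `β a ·` turns a divided
difference into one over the nodes without `a`. So, as for polynomials of degree `m`, a divided
difference over `m + 2` nodes of a product of `m` such functions vanishes.
-/

open Finset

section DivDiff

variable {ι κ K : Type*} [DecidableEq ι] [Field K] (β : ι → ι → K)

/-- For `β j i = x i - x j` this is the classical divided difference `g[x_I]`. -/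
def divDiff (I : Finset ι) (g : ι → K) : K :=
  ∑ i ∈ I, g i / ∏ j ∈ I.erase i, β j i

variable {β}

theorem divDiff_one_of_card_eq_two (hanti : ∀ i j, β i j = -β j i) {I : Finset ι}
    (hI : #I = 2) : divDiff β I 1 = 0 := by
  obtain ⟨a, b, hab, rfl⟩ := card_eq_two.mp hI
  have hb : ({a, b} : Finset ι).erase b = {a} := by
    rw [pair_comm, erase_insert (notMem_singleton.mpr hab.symm)]
  simp only [divDiff, sum_pair hab, erase_insert (notMem_singleton.mpr hab), hb,
    prod_singleton, Pi.one_apply, hanti a b, div_neg, add_neg_cancel]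

theorem divDiff_mul_eq_divDiff_erase {I : Finset ι} {a : ι} (ha : a ∈ I) (hβ_self : β a a = 0)
    (hβ : ∀ i ∈ I, i ≠ a → β a i ≠ 0) (g : ι → K) :
    divDiff β I (fun i ↦ β a i * g i) = divDiff β (I.erase a) g := by
  rw [divDiff, ← add_sum_erase I _ ha, hβ_self, zero_mul, zero_div, zero_add]
  refine sum_congr rfl fun i hi ↦ ?_
  have hia := ne_of_mem_erase hi
  rw [← mul_prod_erase (I.erase i) _ (mem_erase.mpr ⟨hia.symm, ha⟩), erase_right_comm,
    mul_div_mul_left _ _ (hβ i (mem_of_mem_erase hi) hia)]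

theorem divDiff_mul_sub_mul (I : Finset ι) (c d : K) (g h : ι → K) :
    divDiff β I (fun i ↦ c * g i - d * h i) = c * divDiff β I g - d * divDiff β I h := by
  simp only [divDiff, sub_div, mul_div_assoc, sum_sub_distrib, mul_sum]

theorem divDiff_prod_eq_zero (α : κ → ι → K) (hanti : ∀ i j, β i j = -β j i)
    (hβ_self : ∀ i, β i i = 0) (hβ : ∀ i j, i ≠ j → β i j ≠ 0)
    (hTSI : ∀ c i a b, α c a * β b i + α c b * β i a + α c i * β a b = 0)
    (C : Finset κ) {I : Finset ι} (hI : #I = #C + 2) :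
    divDiff β I (fun i ↦ ∏ t ∈ C, α t i) = 0 := by
  induction C using cons_induction generalizing I with
  | empty => simpa [← Pi.one_def] using divDiff_one_of_card_eq_two hanti hI
  | cons c C hc ih =>
    rw [card_cons] at hI
    obtain ⟨a, ha, b, hb, hab⟩ := one_lt_card.mp (by omega : 1 < #I)
    set P := fun i ↦ ∏ t ∈ C, α t i
    have hsplit : (fun i ↦ ∏ t ∈ cons c C hc, α t i) =
        fun i ↦ α c b / β a b * (β a i * P i) - α c a / β a b * (β b i * P i) := by
      funext i
      rw [prod_cons]
      field_simp [hβ a b hab]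
      linear_combination P i * (hTSI c i a b - α c b * hanti i a)
    have hdrop : ∀ x ∈ I, divDiff β (I.erase x) P = 0 := fun x hx ↦
      ih (by rw [card_erase_of_mem hx]; omega)
    rw [hsplit, divDiff_mul_sub_mul,
      divDiff_mul_eq_divDiff_erase ha (hβ_self a) (fun i _ hi ↦ hβ a i hi.symm),
      divDiff_mul_eq_divDiff_erase hb (hβ_self b) (fun i _ hi ↦ hβ b i hi.symm),
      hdrop a ha, hdrop b hb]
    ring

end DivDiff

section IntIntervals

variable {M : Type*} [CommMonoid M] (f : ℤ → M) {k i n : ℤ}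

theorem prod_Icc_mul_prod_Icc_eq_prod_erase (hki : k ≤ i) (hin : i ≤ n) :
    (∏ j ∈ Icc (i + 1) n, f j) * ∏ j ∈ Icc k (i - 1), f j =
      ∏ j ∈ (Icc k n).erase i, f j := by
  rw [mul_comm, ← prod_union (disjoint_left.mpr fun j hj hj' ↦ by simp at hj hj'; omega)]
  congr 1
  ext j; simp; omega

theorem prod_Icc_mul_prod_Icc_eq_mul_prod_Icc (hki : k ≤ i) (hin : i ≤ n) (hkn : k < n) :
    (∏ j ∈ Icc i (n - 1), f j) * ∏ j ∈ Icc (k + 1) i, f j =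
      f i * ∏ j ∈ Icc (k + 1) (n - 1), f j := by
  obtain rfl | hin := hin.eq_or_lt
  · have : Icc (k + 1) i = insert i (Icc (k + 1) (i - 1)) := by ext j; simp; omega
    rw [Icc_eq_empty (by omega), prod_empty, one_mul, this, prod_insert (by simp)]
  · have hinsert : Icc i (n - 1) = insert i (Icc (i + 1) (n - 1)) := by ext j; simp; omega
    have hdisj : Disjoint (Icc (k + 1) i) (Icc (i + 1) (n - 1)) :=
      disjoint_left.mpr fun j hj hj' ↦ by simp at hj hj'; omega
    rw [hinsert, prod_insert (by simp), mul_assoc, mul_comm (∏ j ∈ _, f j),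
      ← prod_union hdisj]
    congr 2
    ext j; simp; omega

end IntIntervals

theorem inversion_summand_eq {K : Type*} [Field K] (α β : ℤ → ℤ → K) {k i n : ℤ}
    (hα : α i i ≠ 0) (hki : k ≤ i) (hin : i ≤ n) (hkn : k < n) :
    (∏ j ∈ Icc i (n - 1), α j i) / (∏ j ∈ Icc (i + 1) n, β j i) *
        (α k k / α i i * (∏ j ∈ Icc (k + 1) i, α j i) / ∏ j ∈ Icc k (i - 1), β j i) =
      α k k * ((∏ j ∈ Icc (k + 1) (n - 1), α j i) / ∏ j ∈ (Icc k n).erase i, β j i) := by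
  calc
    _ = α k k * (((∏ j ∈ Icc i (n - 1), α j i) * ∏ j ∈ Icc (k + 1) i, α j i) /
          (α i i * ((∏ j ∈ Icc (i + 1) n, β j i) * ∏ j ∈ Icc k (i - 1), β j i))) := by
      ring
    _ = _ := by
      rw [prod_Icc_mul_prod_Icc_eq_mul_prod_Icc _ hki hin hkn,
        prod_Icc_mul_prod_Icc_eq_prod_erase _ hki hin, mul_div_mul_left _ _ hα]

/-- The `(α,β)`-inversion formula (Hsu–Ma conjecture, sufficiency direction):
if `β` is antisymmetric, `α n n ≠ 0`, `β n k ≠ 0` for `n ≠ k`, and the triple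
sum identity `α n p * β q k + α n q * β k p + α n k * β p q = 0` holds, then the
matrices `F(n,k) = (∏_{i=k}^{n-1} α i k) / (∏_{i=k+1}^{n} β i k)` and
`G(n,k) = (α k k / α n n) * (∏_{i=k+1}^{n} α i n) / (∏_{i=k}^{n-1} β i n)`
form a matrix inversion. -/
theorem alpha_beta_inversion
    (α β : ℤ → ℤ → ℂ)
    (hanti : ∀ n k : ℤ, β n k = -β k n)
    (hα : ∀ n : ℤ, α n n ≠ 0)
    (hβ : ∀ n k : ℤ, n ≠ k → β n k ≠ 0)
    (hTSI : ∀ n k p q : ℤ, α n p * β q k + α n q * β k p + α n k * β p q = 0) :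
    ∀ k n : ℤ, k ≤ n →
      (∑ i ∈ Finset.Icc k n,
        ((∏ j ∈ Finset.Icc i (n - 1), α j i) / (∏ j ∈ Finset.Icc (i + 1) n, β j i)) *
        ((α k k / α i i) *
          (∏ j ∈ Finset.Icc (k + 1) i, α j i) / (∏ j ∈ Finset.Icc k (i - 1), β j i))) =
      if n = k then 1 else 0 := by
  intro k n hkn
  obtain rfl | hkn := hkn.eq_or_lt
  · simp [hα k]
  have hβ_self : ∀ i, β i i = 0 := fun i ↦ by linear_combination hanti i i / 2
  rw [if_neg hkn.ne', sum_congr rfl fun i hi ↦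
    inversion_summand_eq α β (hα i) (mem_Icc.mp hi).1 (mem_Icc.mp hi).2 hkn, ← mul_sum]
  refine mul_eq_zero_of_right _ (divDiff_prod_eq_zero α hanti hβ_self hβ hTSI _ ?_)
  rw [Int.card_Icc, Int.card_Icc]
  omega
end

section
/- Let a, b, x, y : ℤ → ℂ be sequences, define α(k,n) = x(k)·a(n) + y(k)·b(n) for all integers k, n, and assume α(n,n) ≠ 0 for every integer n. Let β : ℤ × ℤ → ℂ be antisymmetric (β(n,k) = −β(k,n)) with β(n−1,n) = a(n)·b(n−1) − a(n−1)·b(n) for every integer n. Then α and β satisfy the triple sum identity (TSI) if and only if β(k,n) = a(n)·b(k) − a(k)·b(n) for all integers k, n. -/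
/-!
The wedge `β k n = a n * b k - a k * b n` satisfies the triple sum identity with every `α` of the
form `x k * a n + y k * b n`, and the identity is linear in `β`. So the difference `D` of `β` and
the wedge satisfies it too, is antisymmetric and vanishes on the superdiagonal. Evaluating the
identity at `(p - 1, k, p, p - 1)` and `(p + 1, k, p, p + 1)` gives
`α (p ∓ 1) (p ∓ 1) * D k p = α (p ∓ 1) p * D k (p ∓ 1)`, and since `α` does not vanish on the
diagonal, `D k ·` vanishes everywhere because it vanishes at `k + 1`.
-/

def TripleSumIdentity {R : Type*} [CommRing R] (α β : ℤ → ℤ → R) : Prop :=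
  ∀ n k p q : ℤ, α n p * β q k + α n q * β k p + α n k * β p q = 0

namespace TripleSumIdentity

variable {R : Type*} [CommRing R] {α β β' : ℤ → ℤ → R}

theorem sub (h : TripleSumIdentity α β) (h' : TripleSumIdentity α β') :
    TripleSumIdentity α (β - β') := by
  intro n k p q
  simp only [Pi.sub_apply]
  linear_combination h n k p q - h' n k p q

theorem wedge (a b x y : ℤ → R) :
    TripleSumIdentity (fun k n ↦ x k * a n + y k * b n) (fun k n ↦ a n * b k - a k * b n) := by
  intro n k p q
  ring

section Uniqueness

variable [NoZeroDivisors R]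

theorem eq_zero_of_eq_zero_sub_one (h : TripleSumIdentity α β) (hα : ∀ n, α n n ≠ 0)
    (hanti : ∀ n k, β n k = -β k n) (hsuper : ∀ n, β (n - 1) n = 0) {k p : ℤ}
    (hp : β k (p - 1) = 0) : β k p = 0 := by
  have key := h (p - 1) k p (p - 1)
  rw [hanti (p - 1) k, hanti p (p - 1), hp, hsuper p] at key
  simpa [hα (p - 1)] using key

theorem eq_zero_of_eq_zero_add_one (h : TripleSumIdentity α β) (hα : ∀ n, α n n ≠ 0)
    (hanti : ∀ n k, β n k = -β k n) (hsuper : ∀ n, β (n - 1) n = 0) {k p : ℤ}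
    (hp : β k (p + 1) = 0) : β k p = 0 := by
  have key := h (p + 1) k p (p + 1)
  have hsuper' : β p (p + 1) = 0 := by simpa using hsuper (p + 1)
  rw [hanti (p + 1) k, hp, hsuper'] at key
  simpa [hα (p + 1)] using key

theorem eq_zero (h : TripleSumIdentity α β) (hα : ∀ n, α n n ≠ 0)
    (hanti : ∀ n k, β n k = -β k n) (hsuper : ∀ n, β (n - 1) n = 0)
    (k n : ℤ) : β k n = 0 := by
  induction n using Int.inductionOn' (b := k + 1) with
  | zero => simpa using hsuper (k + 1)
  | succ p _ hp =>
    exact h.eq_zero_of_eq_zero_sub_one hα hanti hsuper (by simpa using hp)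
  | pred p _ hp =>
    exact h.eq_zero_of_eq_zero_add_one hα hanti hsuper (by simpa using hp)

end Uniqueness

end TripleSumIdentity

/-- Corollary 3.7 (Wang–Ma): with `α k n = x k * a n + y k * b n` (nonzero on
the diagonal) and `β` antisymmetric with `β (n-1) n = a n * b (n-1) - a (n-1) * b n`,
`α` and `β` satisfy the triple sum identity if and only if
`β k n = a n * b k - a k * b n` for all integers `k, n`. -/
theorem linear_alpha_TSI_iff
    (a b x y : ℤ → ℂ)
    (hα : ∀ n : ℤ, x n * a n + y n * b n ≠ 0)
    (β : ℤ → ℤ → ℂ)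
    (hanti : ∀ n k : ℤ, β n k = -β k n)
    (hβinit : ∀ n : ℤ, β (n - 1) n = a n * b (n - 1) - a (n - 1) * b n) :
    (∀ n k p q : ℤ,
        (x n * a p + y n * b p) * β q k + (x n * a q + y n * b q) * β k p +
          (x n * a k + y n * b k) * β p q = 0)
      ↔ (∀ k n : ℤ, β k n = a n * b k - a k * b n) := by
  constructor
  · intro h k n
    have hD := (TripleSumIdentity.sub h (.wedge a b x y)).eq_zero hα
      (by intro n k; simp only [Pi.sub_apply]; rw [hanti n k]; ring)
      (by intro n; simp only [Pi.sub_apply]; rw [hβinit n]; ring) k n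
    exact sub_eq_zero.mp hD
  · intro hβ
    have : β = fun k n ↦ a n * b k - a k * b n := funext₂ hβ
    exact this ▸ TripleSumIdentity.wedge a b x y
end

section
/- Let α, β : ℤ × ℤ → ℂ be double sequences with β antisymmetric (β(n,k) = −β(k,n)), α(n,n) ≠ 0 for all n, and β(n,k) ≠ 0 whenever n ≠ k. Suppose the matrices F and G with entries F(n,k) = (∏_{i=k}^{n−1} α(i,k)) / (∏_{i=k+1}^{n} β(i,k)) and G(n,k) = (α(k,k)/α(n,n)) · (∏_{i=k+1}^{n} α(i,n)) / (∏_{i=k}^{n−1} β(i,n)) (for k ≤ n) form a matrix inversion. Define f(k,n;i) = (−1)^{n−i} · [ ∏_{(j₁,j₂): k ≤ j₁ < j₂ ≤ n, j₁ ≠ i, j₂ ≠ i} β(j₁,j₂) ] · [ ∏_{j=k+1}^{n−1} α(j,i) ] and g(k,n;i) = (−1)^{n−i} · [ ∏_{(j₁,j₂): k ≤ j₁ < j₂ ≤ n, j₁ ≠ i, j₂ ≠ i, j₂ − j₁ ≤ n−k−1} β(j₁,j₂) ] · [ ∏_{j=k+1}^{n−1} α(j,i) ]. Then for all integers k ≤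 n such that ∑_{i=k+1}^{n−1} g(k,n;i) ≠ 0, one has β(k,n) = −( f(k,n;k) + f(k,n;n) ) / ( ∑_{i=k+1}^{n−1} g(k,n;i) ). -/
/-!
Fix `k < n` and let `P = ∏_{k ≤ j₁ < j₂ ≤ n} β(j₁,j₂)`. Splitting off from `P` the factors
involving `i` and using antisymmetry, `α(k,k) · P · F(n,i) G(i,k) = f(k,n;i)`, so the vanishing
`(n,k)` entry of `F G` gives `∑_{i=k}^{n} f(k,n;i) = 0`. For `k < i < n` the pair `(k,n)` is the
only factor of `f(k,n;i)` with `j₂ - j₁ > n - k - 1`, hence `f(k,n;i) = β(k,n) g(k,n;i)`, and the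
vanishing sum is linear in `β(k,n)`.
-/

open Finset

/-- `f(k,n;i) = (-1)^{n-i} * ∏_{k ≤ j₁ < j₂ ≤ n, j₁ ≠ i, j₂ ≠ i} β(j₁,j₂)
    * ∏_{j=k+1}^{n-1} α(j,i)`. -/
noncomputable def fAux (α β : ℤ → ℤ → ℂ) (k n i : ℤ) : ℂ :=
  (-1 : ℂ) ^ (n - i) *
    (∏ p ∈ (Finset.Icc k n ×ˢ Finset.Icc k n).filter
        (fun p => p.1 < p.2 ∧ p.1 ≠ i ∧ p.2 ≠ i), β p.1 p.2) *
    ∏ j ∈ Finset.Icc (k + 1) (n - 1), α j i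

/-- `g(k,n;i) = (-1)^{n-i} * ∏_{k ≤ j₁ < j₂ ≤ n, j₁ ≠ i, j₂ ≠ i, j₂ - j₁ ≤ n-k-1} β(j₁,j₂)
    * ∏_{j=k+1}^{n-1} α(j,i)`. -/
noncomputable def gAux (α β : ℤ → ℤ → ℂ) (k n i : ℤ) : ℂ :=
  (-1 : ℂ) ^ (n - i) *
    (∏ p ∈ (Finset.Icc k n ×ˢ Finset.Icc k n).filter
        (fun p => p.1 < p.2 ∧ p.1 ≠ i ∧ p.2 ≠ i ∧ p.2 - p.1 ≤ n - k - 1), β p.1 p.2) *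
    ∏ j ∈ Finset.Icc (k + 1) (n - 1), α j i

theorem prod_pairs_lt_eq_prod_avoid_mul {ι M : Type*} [LinearOrder ι] [CommMonoid M]
    (s : Finset ι) {i : ι} (hi : i ∈ s)
    (b : ι → ι → M) :
    ∏ p ∈ (s ×ˢ s).filter (fun p => p.1 < p.2), b p.1 p.2 =
      (∏ p ∈ (s ×ˢ s).filter (fun p => p.1 < p.2 ∧ p.1 ≠ i ∧ p.2 ≠ i), b p.1 p.2) *
        ((∏ j ∈ s.filter (i < ·), b i j) * ∏ j ∈ s.filter (· < i), b j i) := by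
  have hthrough : ((s ×ˢ s).filter (fun p => p.1 < p.2)).filter
      (fun p => ¬(p.1 ≠ i ∧ p.2 ≠ i)) =
        (s.filter (i < ·)).map (.sectR i ι) ∪ (s.filter (· < i)).map (.sectL ι i) := by
    ext ⟨a, c⟩
    simp only [mem_filter, mem_product, mem_union, mem_map, Function.Embedding.sectR_apply,
      Function.Embedding.sectL_apply, Prod.mk.injEq]
    grind
  have hdisj : Disjoint ((s.filter (i < ·)).map (.sectR i ι))
      ((s.filter (· < i)).map (.sectL ι i)) := by
    simp only [disjoint_left, mem_map, mem_filter, Function.Embedding.sectR_apply,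
      Function.Embedding.sectL_apply]
    grind
  rw [← prod_filter_mul_prod_filter_not _ (fun p => p.1 ≠ i ∧ p.2 ≠ i), filter_filter,
    hthrough, prod_union hdisj, prod_map, prod_map]
  rfl

theorem prod_Icc_mul_prod_Icc {M : Type*} [CommMonoid M] (f : ℤ → M) {k i n : ℤ}
    (hki : k ≤ i) (hin : i ≤ n) (hkn : k < n) :
    (∏ j ∈ Icc i (n - 1), f j) * ∏ j ∈ Icc (k + 1) i, f j =
      f i * ∏ j ∈ Icc (k + 1) (n - 1), f j := by
  rcases hin.eq_or_lt with rfl | hin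
  · rw [Icc_eq_empty (by omega), prod_empty, one_mul,
      ← insert_Icc_sub_one_right_eq_Icc (by omega : k + 1 ≤ i),
      prod_insert (by simp)]
  · have hunion : Icc (k + 1) (n - 1) = Icc (k + 1) i ∪ Icc (i + 1) (n - 1) := by
      ext j; simp only [mem_Icc, mem_union]; omega
    rw [← insert_Icc_add_one_left_eq_Icc (by omega : i ≤ n - 1), prod_insert (by simp),
      hunion, prod_union (disjoint_left.2 fun j hj hj' => by
        simp only [mem_Icc] at hj hj'; omega)]
    ac_rfl

theorem prod_Icc_swap_of_antisymm {K : Type*} [Field K] {β : ℤ → ℤ → K}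
    (hanti : ∀ n k, β n k = -β k n) {i n : ℤ} (hin : i ≤ n) :
    ∏ j ∈ Icc (i + 1) n, β i j = (-1) ^ (n - i) * ∏ j ∈ Icc (i + 1) n, β j i := by
  have hcard : (((Icc (i + 1) n).card : ℕ) : ℤ) = n - i := by
    rw [Int.card_Icc]; omega
  simp_rw [hanti i, prod_neg, ← hcard, zpow_natCast]

theorem prod_Icc_pairs_eq {K : Type*} [Field K] {β : ℤ → ℤ → K}
    (hanti : ∀ n k, β n k = -β k n) {k i n : ℤ} (hki : k ≤ i) (hin : i ≤ n) :
    ∏ p ∈ (Icc k n ×ˢ Icc k n).filter (fun p => p.1 < p.2), β p.1 p.2 =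
      (∏ p ∈ (Icc k n ×ˢ Icc k n).filter (fun p => p.1 < p.2 ∧ p.1 ≠ i ∧ p.2 ≠ i),
          β p.1 p.2) *
        ((-1) ^ (n - i) * (∏ j ∈ Icc (i + 1) n, β j i) * ∏ j ∈ Icc k (i - 1), β j i) := by
  have habove : (Icc k n).filter (i < ·) = Icc (i + 1) n := by
    ext j; simp only [mem_filter, mem_Icc]; omega
  have hbelow : (Icc k n).filter (· < i) = Icc k (i - 1) := by
    ext j; simp only [mem_filter, mem_Icc]; omega
  rw [prod_pairs_lt_eq_prod_avoid_mul _ (mem_Icc.2 ⟨hki, hin⟩), habove, hbelow,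
    prod_Icc_swap_of_antisymm hanti hin]

/-- `invF α β n i * invG α β i k` is the `i`-th summand of the `(n,k)` entry of `F G` in the
hypothesis of `beta_formula_from_inversion`. -/
noncomputable def invF (α β : ℤ → ℤ → ℂ) (n i : ℤ) : ℂ :=
  (∏ j ∈ Icc i (n - 1), α j i) / (∏ j ∈ Icc (i + 1) n, β j i)

noncomputable def invG (α β : ℤ → ℤ → ℂ) (i k : ℤ) : ℂ :=
  (α k k / α i i) * (∏ j ∈ Icc (k + 1) i, α j i) / (∏ j ∈ Icc k (i - 1), β j i)

section Inversion

variable {α β : ℤ → ℤ → ℂ}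

theorem invF_mul_invG_mul_prod_pairs (hanti : ∀ n k, β n k = -β k n)
    (hα : ∀ n, α n n ≠ 0) (hβ : ∀ n k, n ≠ k → β n k ≠ 0)
    {k i n : ℤ} (hki : k ≤ i) (hin : i ≤ n) (hkn : k < n) :
    invF α β n i * invG α β i k *
        ∏ p ∈ (Icc k n ×ˢ Icc k n).filter (fun p => p.1 < p.2), β p.1 p.2 =
      α k k * fAux α β k n i := by
  have hβ_ne {s : Finset ℤ} (hs : i ∉ s) : ∏ j ∈ s, β j i ≠ 0 :=
    prod_ne_zero_iff.2 fun j hj => hβ j i (ne_of_mem_of_not_mem hj hs)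
  have hαsplit := prod_Icc_mul_prod_Icc (α · i) hki hin hkn
  rw [prod_Icc_pairs_eq hanti hki hin, invF, invG, fAux]
  field_simp [hα i, hβ_ne (s := Icc (i + 1) n) (by simp), hβ_ne (s := Icc k (i - 1)) (by simp)]
  linear_combination (α k k *
    ∏ p ∈ (Icc k n ×ˢ Icc k n).filter (fun p => p.1 < p.2 ∧ p.1 ≠ i ∧ p.2 ≠ i), β p.1 p.2)
      * hαsplit

theorem sum_fAux_eq_zero (hanti : ∀ n k, β n k = -β k n)
    (hα : ∀ n, α n n ≠ 0) (hβ : ∀ n k, n ≠ k → β n k ≠ 0) {k n : ℤ} (hkn : k < n)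
    (horth : ∑ i ∈ Icc k n, invF α β n i * invG α β i k = 0) :
    ∑ i ∈ Icc k n, fAux α β k n i = 0 := by
  have hscaled : α k k * ∑ i ∈ Icc k n, fAux α β k n i =
      (∑ i ∈ Icc k n, invF α β n i * invG α β i k) *
        ∏ p ∈ (Icc k n ×ˢ Icc k n).filter (fun p => p.1 < p.2), β p.1 p.2 := by
    rw [mul_sum, sum_mul]
    refine sum_congr rfl fun i hi => ?_
    rw [mem_Icc] at hi
    exact (invF_mul_invG_mul_prod_pairs hanti hα hβ hi.1 hi.2 hkn).symm
  rw [horth, zero_mul] at hscaled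
  exact (mul_eq_zero.1 hscaled).resolve_left (hα k)

end Inversion

theorem fAux_eq_mul_gAux (α β : ℤ → ℤ → ℂ) {k i n : ℤ} (hki : k < i) (hin : i < n) :
    fAux α β k n i = β k n * gAux α β k n i := by
  have hnot : (k, n) ∉ (Icc k n ×ˢ Icc k n).filter
      (fun p => p.1 < p.2 ∧ p.1 ≠ i ∧ p.2 ≠ i ∧ p.2 - p.1 ≤ n - k - 1) := by
    simp
  have hinsert : (Icc k n ×ˢ Icc k n).filter (fun p => p.1 < p.2 ∧ p.1 ≠ i ∧ p.2 ≠ i) =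
      insert (k, n) ((Icc k n ×ˢ Icc k n).filter
        (fun p => p.1 < p.2 ∧ p.1 ≠ i ∧ p.2 ≠ i ∧ p.2 - p.1 ≤ n - k - 1)) := by
    ext ⟨a, c⟩
    simp only [mem_filter, mem_product, mem_Icc, mem_insert, Prod.mk.injEq]
    omega
  rw [fAux, gAux, hinsert, prod_insert hnot]
  ring

/-- Proposition 3.8 (Wang–Ma): if `α, β` (with `β` antisymmetric, `α n n ≠ 0`,
`β n k ≠ 0` for `n ≠ k`) give rise to an `(α,β)`-matrix inversion, then for
all `k ≤ n` with `∑_{i=k+1}^{n-1} g(k,n;i) ≠ 0`,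
`β k n = -(f(k,n;k) + f(k,n;n)) / ∑_{i=k+1}^{n-1} g(k,n;i)`. -/
theorem beta_formula_from_inversion
    (α β : ℤ → ℤ → ℂ)
    (hanti : ∀ n k : ℤ, β n k = -β k n)
    (hα : ∀ n : ℤ, α n n ≠ 0)
    (hβ : ∀ n k : ℤ, n ≠ k → β n k ≠ 0)
    (hinv : ∀ k n : ℤ, k ≤ n →
      (∑ i ∈ Finset.Icc k n,
        ((∏ j ∈ Finset.Icc i (n - 1), α j i) / (∏ j ∈ Finset.Icc (i + 1) n, β j i)) *
        ((α k k / α i i) *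
          (∏ j ∈ Finset.Icc (k + 1) i, α j i) / (∏ j ∈ Finset.Icc k (i - 1), β j i))) =
      if n = k then 1 else 0) :
    ∀ k n : ℤ, k ≤ n →
      (∑ i ∈ Finset.Icc (k + 1) (n - 1), gAux α β k n i) ≠ 0 →
      β k n = -(fAux α β k n k + fAux α β k n n) /
        (∑ i ∈ Finset.Icc (k + 1) (n - 1), gAux α β k n i) := by
  intro k n hkn hg
  have hlt : k < n := hkn.lt_of_ne <| by rintro rfl; simp at hg
  have hsum := sum_fAux_eq_zero hanti hα hβ hlt ((hinv k n hkn).trans (if_neg hlt.ne'))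
  have hinterior : ∑ i ∈ Icc (k + 1) (n - 1), fAux α β k n i =
      β k n * ∑ i ∈ Icc (k + 1) (n - 1), gAux α β k n i := by
    rw [mul_sum]
    exact sum_congr rfl fun i hi => fAux_eq_mul_gAux α β (by grind) (by grind)
  rw [← insert_Icc_add_one_left_eq_Icc hkn, sum_insert (by simp),
    ← insert_Icc_sub_one_right_eq_Icc (by omega : k + 1 ≤ n), sum_insert (by simp),
    hinterior] at hsum
  rw [eq_div_iff hg]
  linear_combination hsum
end
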